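/- arXiv:1312.2924 — 2 statements merged into one kernel-verified Lean document; each statement's English description precedes it below -/
import Mathlib

section
/- Let n ≥ 3 and let d_i : Sym(n) → Sym(n−1) be the strand-deletion maps. If σ ∈ Sym(n) satisfies d_i(σ) = 1 for all i ∈ {1,…,n}, then σ = 1. (In other words, the intersection of the 'kernels' of all the face maps is trivial for n ≥ 3.) -/
/-- Strand-deletion map `d_i : Sym(n+1) → Sym(n)`. -/
def strandDel {n : ℕ} (i : Fin (n + 1)) (σ : Equiv.Perm (Fin (n + 1))) :
    Equiv.Perm (Fin n) :=
  Equiv.removeNone ((finSuccEquiv' i).symm.trans (σ.trans (finSuccEquiv' (σ i))))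

lemma strandDel_key {n : ℕ} (i : Fin (n + 1)) (σ : Equiv.Perm (Fin (n + 1)))
    (h : strandDel i σ = 1) (k : Fin n) : σ (i.succAbove k) = (σ i).succAbove k := by
  set e := (finSuccEquiv' i).symm.trans (σ.trans (finSuccEquiv' (σ i))) with he
  have hesome : e (some k) = finSuccEquiv' (σ i) (σ (i.succAbove k)) := by
    simp [he, Equiv.trans_apply, finSuccEquiv'_symm_some]
  have henone : e none = none := by
    simp [he, Equiv.trans_apply, finSuccEquiv'_symm_none]
  have hsome : ∃ x', e (some k) = some x' := by
    cases hx : e (some k) with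
    | none => exact absurd (e.injective (hx.trans henone.symm)) (by simp)
    | some x => exact ⟨x, rfl⟩
  have hmain := Equiv.removeNone_some e hsome
  have hrm : Equiv.removeNone e k = k := by
    have := congrArg (fun f => f k) h
    simpa [strandDel, ← he] using this
  rw [hrm, hesome] at hmain
  have := (finSuccEquiv' (σ i)).injective
    ((finSuccEquiv'_succAbove (σ i) k).trans hmain)
  exact this.symm


lemma val_succAbove' {n : ℕ} (i : Fin (n + 1)) (k : Fin n) :
    (i.succAbove k : ℕ) = if (k : ℕ) < (i : ℕ) then (k : ℕ) else (k : ℕ) + 1 := by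
  rw [Fin.succAbove]
  split_ifs with h1 h2 h2 <;> simp_all [Fin.lt_def]

/-- For `n + 1 ≥ 3`, a permutation all of whose strand deletions are trivial is trivial:
there are no nontrivial Brunnian permutations on at least 3 letters. -/
theorem eq_one_of_forall_strandDel_eq_one (n : ℕ) (hn : 3 ≤ n + 1)
    (σ : Equiv.Perm (Fin (n + 1))) (h : ∀ i : Fin (n + 1), strandDel i σ = 1) :
    σ = 1 := by
  obtain ⟨m, rfl⟩ : ∃ m, n = m + 2 := ⟨n - 2, by omega⟩
  have h0 : ∀ k : Fin (m+2), σ (Fin.succ k) = (σ 0).succAbove k :=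
    fun k => by simpa using strandDel_key 0 σ (h 0) k
  have hl : ∀ k : Fin (m+2), σ (Fin.castSucc k) = (σ (Fin.last (m+2))).succAbove k :=
    fun k => by simpa using strandDel_key (Fin.last (m+2)) σ (h (Fin.last (m+2))) k
  have e1 : σ 1 = (σ 0).succAbove 0 := by
    have := h0 0; rwa [Fin.succ_zero_eq_one] at this
  have e2 : σ 1 = (σ (Fin.last (m+2))).succAbove 1 := by
    have := hl 1; rwa [Fin.castSucc_one] at this
  have v1 := congrArg Fin.val e1
  have v2 := congrArg Fin.val e2
  rw [val_succAbove'] at v1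
  rw [val_succAbove'] at v2
  have ha : (σ 0 : ℕ) = 0 := by
    rw [Fin.val_zero] at v1; rw [Fin.val_one] at v2
    split_ifs at v1 v2 <;> omega
  have h00 : σ 0 = 0 := by
    ext; simpa using ha
  ext x
  simp only [Equiv.Perm.coe_one, id_eq]
  cases x using Fin.cases with
  | zero => exact congrArg Fin.val h00
  | succ k =>
      have := h0 k
      rw [h00, Fin.succAbove_zero] at this
      exact congrArg Fin.val this
end

section
/- Let n ≥ 2 and let d_i : Sym(n) → Sym(n−1) be the strand-deletion maps. The set H = {σ ∈ Sym(n) : d_1(σ) = d_2(σ) = ⋯ = d_n(σ)} equals {1, w₀}, where w₀ is the order-reversing permutation k ↦ n+1−k. In particular H has exactly 2 elements. -/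
lemma strandDel_spec {n : ℕ} (i : Fin (n + 1)) (σ : Equiv.Perm (Fin (n + 1))) (k : Fin n) :
    (σ i).succAbove (strandDel i σ k) = σ (i.succAbove k) := by
  obtain ⟨m, hm⟩ : ∃ m, (σ i).succAbove m = σ (i.succAbove k) :=
    Fin.exists_succAbove_eq (σ.injective.ne (Fin.succAbove_ne i k))
  have he : ((finSuccEquiv' i).symm.trans (σ.trans (finSuccEquiv' (σ i)))) (some k) = some m := by
    simp only [Equiv.trans_apply, finSuccEquiv'_symm_some, ← hm, finSuccEquiv'_succAbove]
  have h2 := Equiv.removeNone_some _ ⟨m, he⟩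
  rw [he] at h2
  have hx : strandDel i σ k = m := Option.some_injective _ h2
  rw [hx]; exact hm

lemma succAbove_cases {n : ℕ} (p : Fin (n + 1)) (t : Fin n) :
    (p.succAbove t = t.castSucc ∧ t.castSucc < p) ∨
      (p.succAbove t = t.succ ∧ p ≤ t.castSucc) := by
  rcases lt_or_ge t.castSucc p with h | h
  · exact Or.inl ⟨Fin.succAbove_of_castSucc_lt _ _ h, h⟩
  · exact Or.inr ⟨Fin.succAbove_of_le_castSucc _ _ h, h⟩

/-- For `n + 1 ≥ 2`, the set of permutations whose strand deletions all coincide is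
exactly `{1, w₀}`, where `w₀` is the order-reversing permutation. -/
theorem cohen_perms_eq_pair (n : ℕ) (hn : 2 ≤ n + 1) :
    {σ : Equiv.Perm (Fin (n + 1)) |
        ∀ i j : Fin (n + 1), strandDel i σ = strandDel j σ} =
      {1, Fin.revPerm} := by
  have hn1 : 1 ≤ n := by omega
  ext σ
  simp only [Set.mem_setOf_eq, Set.mem_insert_iff, Set.mem_singleton_iff]
  constructor
  · intro hσ
    obtain ⟨τ, hτ⟩ : ∃ τ : Equiv.Perm (Fin n), ∀ i, strandDel i σ = τ :=
      ⟨strandDel 0 σ, fun i => hσ i 0⟩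
    have hkey : ∀ (i : Fin (n + 1)) (k : Fin n),
        (σ i).succAbove (τ k) = σ (i.succAbove k) := by
      intro i k
      rw [← hτ i]; exact strandDel_spec i σ k
    -- prefix lemma
    have hA : ∀ k : Fin n, (∀ i ≤ k.castSucc, σ i < σ k.succ) ∨
        (∀ i ≤ k.castSucc, σ k.succ < σ i) := by
      intro k
      have h0 : ∀ i ≤ k.castSucc, (σ i).succAbove (τ k) = σ k.succ := by
        intro i hi
        rw [hkey i k, Fin.succAbove_of_le_castSucc _ _ hi]
      rcases succAbove_cases (σ 0) (τ k) with ⟨hc, _⟩ | ⟨hc, _⟩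
      · rw [h0 0 (Fin.zero_le _)] at hc
        refine Or.inr fun i hi => ?_
        rcases succAbove_cases (σ i) (τ k) with ⟨hc', hlt⟩ | ⟨hc', _⟩
        · rw [h0 i hi] at hc'; rw [← hc'] at hlt; exact hlt
        · rw [h0 i hi] at hc'; rw [hc'] at hc
          exact absurd hc (Fin.castSucc_lt_succ : (τ k).castSucc < (τ k).succ).ne'
      · rw [h0 0 (Fin.zero_le _)] at hc
        refine Or.inl fun i hi => ?_
        rcases succAbove_cases (σ i) (τ k) with ⟨hc', _⟩ | ⟨hc', hle⟩
        · rw [h0 i hi] at hc'; rw [hc'] at hc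
          exact absurd hc.symm (Fin.castSucc_lt_succ : (τ k).castSucc < (τ k).succ).ne'
        · rw [h0 i hi] at hc'
          calc σ i ≤ (τ k).castSucc := hle
            _ < (τ k).succ := Fin.castSucc_lt_succ
            _ = σ k.succ := hc'.symm ▸ rfl
    -- suffix lemma at 0
    set z : Fin n := ⟨0, hn1⟩ with hz
    have hcs : z.castSucc = (0 : Fin (n + 1)) := rfl
    have hB : (∀ i : Fin (n + 1), 0 < i → σ i < σ 0) ∨
        (∀ i : Fin (n + 1), 0 < i → σ 0 < σ i) := by
      have h0 : ∀ i : Fin (n + 1), 0 < i → (σ i).succAbove (τ z) = σ 0 := by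
        intro i hi
        rw [hkey i z, Fin.succAbove_of_castSucc_lt _ _ (hcs ▸ hi), hcs]
      rcases succAbove_cases (σ z.succ) (τ z) with ⟨hc, _⟩ | ⟨hc, _⟩
      · rw [h0 z.succ (Fin.succ_pos z)] at hc
        refine Or.inr fun i hi => ?_
        rcases succAbove_cases (σ i) (τ z) with ⟨hc', hlt⟩ | ⟨hc', _⟩
        · rw [h0 i hi] at hc'; rw [← hc'] at hlt; exact hlt
        · rw [h0 i hi] at hc'; rw [hc'] at hc
          exact absurd hc (Fin.castSucc_lt_succ : (τ z).castSucc < (τ z).succ).ne'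
      · rw [h0 z.succ (Fin.succ_pos z)] at hc
        refine Or.inl fun i hi => ?_
        rcases succAbove_cases (σ i) (τ z) with ⟨hc', _⟩ | ⟨hc', hle⟩
        · rw [h0 i hi] at hc'; rw [hc'] at hc
          exact absurd hc.symm (Fin.castSucc_lt_succ : (τ z).castSucc < (τ z).succ).ne'
        · rw [h0 i hi] at hc'
          calc σ i ≤ (τ z).castSucc := hle
            _ < (τ z).succ := Fin.castSucc_lt_succ
            _ = σ 0 := hc'.symm ▸ rfl
    rcases hB with hneg | hpos
    · -- strictly decreasing: σ = revPerm
      right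
      have hanti : ∀ k : Fin n, σ k.succ < σ k.castSucc := by
        intro k
        rcases hA k with h | h
        · have h1 := h 0 (Fin.zero_le _)
          have h2 := hneg k.succ (Fin.succ_pos k)
          exact absurd h1 (asymm h2)
        · exact h k.castSucc le_rfl
      have hmono : StrictMono (fun x => (σ x).rev) := by
        rw [Fin.strictMono_iff_lt_succ]
        intro k
        exact Fin.rev_lt_rev.mpr (hanti k)
      have hfe : (fun x => (σ x).rev) = id := by
        refine (@StrictMono.range_inj (Fin (n + 1)) (Fin (n + 1)) _ _
          (inferInstance : WellFoundedLT (Fin (n + 1))) _ id hmono strictMono_id).1 ?_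
        rw [Set.range_id]
        exact (Fin.rev_surjective.comp σ.surjective).range_eq
      refine Equiv.ext fun x => ?_
      have h1 : (σ x).rev = x := congrFun hfe x
      have h2 := congrArg Fin.rev h1
      rw [Fin.rev_rev] at h2
      rw [Fin.revPerm_apply]
      exact h2
    · -- strictly increasing: σ = 1
      left
      have hmono : StrictMono σ := by
        rw [Fin.strictMono_iff_lt_succ]
        intro k
        rcases hA k with h | h
        · exact h k.castSucc le_rfl
        · have h1 := h 0 (Fin.zero_le _)
          have h2 := hpos k.succ (Fin.succ_pos k)
          exact absurd h1 (asymm h2)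
      have hfe : ⇑σ = id := by
        refine (@StrictMono.range_inj (Fin (n + 1)) (Fin (n + 1)) _ _
          (inferInstance : WellFoundedLT (Fin (n + 1))) _ id hmono strictMono_id).1 ?_
        rw [Set.range_id]
        exact σ.surjective.range_eq
      exact Equiv.ext fun x => congrFun hfe x
  · rintro (rfl | rfl)
    · intro i j
      ext k
      have hi := strandDel_spec i 1 k
      have hj := strandDel_spec j 1 k
      simp only [Equiv.Perm.one_apply] at hi hj
      rw [Fin.succAbove_right_injective.eq_iff] at hi hj
      rw [hi, hj]
    · intro i j
      ext k
      have hs : ∀ m : Fin (n + 1), strandDel m Fin.revPerm k = k.rev := by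
        intro m
        have h := strandDel_spec m Fin.revPerm k
        simp only [Fin.revPerm_apply] at h
        rw [Fin.rev_succAbove] at h
        exact Fin.succAbove_right_injective h
      rw [hs i, hs j]
end
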